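/- Fix integers k ≥ 2 and j ≥ 0. There exists a constant C > 0 such that for every integer n ≥ 1, |_kω_n(j) − (1/(j!·n^j))·(1 − 1/n)| ≤ C/n^{j+2}. -/

import Mathlib

/-- The action of an element of the wreath product `C_n ≀ S_r` on `B(n,r)`. -/
def wAct (n r : ℕ) (σ : (Fin r → ZMod n) × Equiv.Perm (Fin r)) :
    ZMod n × Fin r → ZMod n × Fin r :=
  fun p => (σ.1 p.2 + p.1, σ.2 p.2)

/-- The number of fixed points of `σ ∈ C_n ≀ S_r` acting on `B(n,r)`. -/
noncomputable def fixCount (n r : ℕ) (σ : (Fin r → ZMod n) × Equiv.Perm (Fin r)) : ℕ :=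
  Nat.card {p : ZMod n × Fin r // wAct n r σ p = p}

/-- `ω_{n,r}(j)`: the proportion of elements `σ` of `C_n ≀ S_r` with exactly
`j·n` fixed points on `B(n,r)`. -/
noncomputable def omega (n r j : ℕ) : ℝ :=
  (Nat.card {σ : (Fin r → ZMod n) × Equiv.Perm (Fin r) // fixCount n r σ = j * n} : ℝ)
    / ((r.factorial * n ^ r : ℕ) : ℝ)

/-- `r_k(n) = (1/n) · Σ_{d ∣ n} μ(n/d) k^d`. -/
noncomputable def rk (k n : ℕ) : ℕ :=
  ((∑ d ∈ n.divisors, ArithmeticFunction.moebius (n / d) * (k : ℤ) ^ d) / (n : ℤ)).toNat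

/-- `_kω_n := ω_{n, r_k(n)}`. -/
noncomputable def komega (k n j : ℕ) : ℝ := omega n (rk k n) j

/-!
A point `(ζ, i)` of `B(n,r)` is fixed by `(ζ, π)` iff `π i = i` and `ζ_i = 0`, so the fixed
points come in blocks of `n`, one per "fixed coordinate" `i`. Inclusion–exclusion over the sets
of fixed coordinates gives the exact formula
`ω_{n,r}(j) = n^{-j}/j! · ∑_{t=0}^{r-j} (-1/n)^t / t!`,
a truncated exponential series in `-1/n`; once `r > j` it differs from `1 - 1/n` by at most
`3/n²`. Since `∑_{d ∣ n} μ(n/d) k^d > k^n - k^{n/2+1}`, `r_k(n) → ∞`, so the bound holds for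
all large `n`, and the finitely many remaining `n` are absorbed into the constant.
-/

open Finset Equiv Filter
open scoped Nat

section FixedCoords

variable {n : ℕ} {α : Type*} [Fintype α] [DecidableEq α]

def fixedCoords (σ : (α → ZMod n) × Perm α) : Finset α :=
  {i | σ.2 i = i ∧ σ.1 i = 0}

lemma card_perm_fixing (U : Finset α) :
    #{π : Perm α | ∀ i ∈ U, π i = i} = (Fintype.card α - #U)! := by
  rw [← Fintype.card_subtype, ← card_compl, ← Fintype.card_coe, ← Fintype.card_perm]
  refine Fintype.card_congr ((Perm.subtypeEquivSubtypePerm (· ∈ Uᶜ)).trans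
    (Equiv.subtypeEquivRight fun π => ?_)).symm
  simp

lemma subset_fixedCoords_iff (U : Finset α) (σ : (α → ZMod n) × Perm α) :
    U ⊆ fixedCoords σ ↔ (∀ i ∈ U, σ.1 i = 0) ∧ ∀ i ∈ U, σ.2 i = i := by
  simp only [fixedCoords, subset_iff, mem_filter, mem_univ, true_and]
  grind

variable [NeZero n]

lemma card_fun_vanishing (U : Finset α) :
    #{ζ : α → ZMod n | ∀ i ∈ U, ζ i = 0} = n ^ (Fintype.card α - #U) := by
  have : ({ζ : α → ZMod n | ∀ i ∈ U, ζ i = 0} : Finset _) =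
      Fintype.piFinset fun i => if i ∈ U then {0} else univ := by
    ext ζ
    simp only [mem_filter, mem_univ, true_and, Fintype.mem_piFinset]
    refine forall_congr' fun i => ?_
    split_ifs <;> simp [*]
  rw [this, Fintype.card_piFinset, ← card_compl, ← prod_const]
  simp [apply_ite card, prod_ite, filter_not, compl_eq_univ_sdiff]

lemma card_subset_fixedCoords (U : Finset α) :
    #{σ : (α → ZMod n) × Perm α | U ⊆ fixedCoords σ} =
      n ^ (Fintype.card α - #U) * (Fintype.card α - #U)! := by
  rw [← card_fun_vanishing, ← card_perm_fixing, ← card_product, ← filter_product,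
    univ_product_univ]
  simp only [subset_fixedCoords_iff]

/-- By inclusion–exclusion, the number of elements of `C_n ≀ S_m` without fixed points on
`B(n,m)` (see `card_fixedCoords_eq` with `S = ∅`). -/
def numWreathDerangements (n m : ℕ) : ℤ :=
  ∑ t ∈ range (m + 1), (-1) ^ t * (m.choose t * (n ^ (m - t) * (m - t)!))

lemma card_fixedCoords_eq (S : Finset α) :
    #{σ : (α → ZMod n) × Perm α | fixedCoords σ = S} =
      numWreathDerangements n (Fintype.card α - #S) := by
  set m := Fintype.card α - #S
  set A : α → Finset ((α → ZMod n) × Perm α) := fun i => {σ | i ∈ fixedCoords σ}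
  have hA : ∀ T σ, σ ∈ T.inf A ↔ T ⊆ fixedCoords σ := by simp [A, mem_inf, subset_iff]
  have h := inclusion_exclusion_sum_inf_compl Sᶜ A
    fun σ => if S ⊆ fixedCoords σ then (1 : ℤ) else 0
  simp only [sum_boole, smul_eq_mul] at h
  have hlhs : {σ ∈ Sᶜ.inf fun i => (A i)ᶜ | S ⊆ fixedCoords σ} =
      ({σ : (α → ZMod n) × Perm α | fixedCoords σ = S} : Finset _) := by
    ext σ
    simp only [mem_filter, mem_inf, mem_compl, mem_univ, true_and, A]
    constructor
    · rintro ⟨hc, hS⟩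
      exact subset_antisymm (fun i hi => by_contra fun hiS => hc i hiS hi) hS
    · rintro rfl
      exact ⟨fun i hi => hi, subset_rfl⟩
  have hrhs : ∀ T ∈ Sᶜ.powerset,
      (#{σ ∈ T.inf A | S ⊆ fixedCoords σ} : ℤ) = n ^ (m - #T) * (m - #T)! := by
    intro T hT
    have hST : Disjoint S T :=
      disjoint_left.2 fun i hi hiT => mem_compl.1 (mem_powerset.1 hT hiT) hi
    have : {σ ∈ T.inf A | S ⊆ fixedCoords σ} =
        ({σ : (α → ZMod n) × Perm α | S ∪ T ⊆ fixedCoords σ} : Finset _) := by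
      ext σ
      simp only [mem_filter, hA, mem_univ, true_and, union_subset_iff, and_comm]
    rw [this, card_subset_fixedCoords, card_union_of_disjoint hST, ← Nat.sub_sub]
    push_cast
    rfl
  rw [hlhs, sum_congr rfl fun T hT => by rw [hrhs T hT],
    sum_powerset_apply_card fun t => (-1) ^ t * ((n : ℤ) ^ (m - t) * (m - t)!), card_compl] at h
  rw [h, numWreathDerangements]
  simp only [nsmul_eq_mul, mul_left_comm]
  rfl

lemma card_card_fixedCoords_eq (j : ℕ) :
    #{σ : (α → ZMod n) × Perm α | #(fixedCoords σ) = j} =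
      (Fintype.card α).choose j * numWreathDerangements n (Fintype.card α - j) := by
  rw [card_eq_sum_card_fiberwise (f := fixedCoords) (t := powersetCard j univ)
    fun σ hσ => mem_powersetCard_univ.2 (mem_filter.1 hσ).2]
  have hfiber : ∀ S ∈ powersetCard j (univ : Finset α),
      #{σ ∈ {σ : (α → ZMod n) × Perm α | #(fixedCoords σ) = j} | fixedCoords σ = S} =
        #{σ : (α → ZMod n) × Perm α | fixedCoords σ = S} := by
    intro S hS
    rw [filter_filter]
    congr 1
    exact filter_congr fun σ _ =>
      ⟨And.right, fun h => ⟨h ▸ mem_powersetCard_univ.1 hS, h⟩⟩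
  rw [sum_congr rfl fun S hS => hfiber S hS, Nat.cast_sum,
    sum_congr rfl fun S hS => by rw [card_fixedCoords_eq, mem_powersetCard_univ.1 hS],
    sum_const, card_powersetCard, card_univ, nsmul_eq_mul]

end FixedCoords

lemma wAct_eq_self_iff {n r : ℕ} (σ : (Fin r → ZMod n) × Perm (Fin r)) (p : ZMod n × Fin r) :
    wAct n r σ p = p ↔ p.2 ∈ fixedCoords σ := by
  simp [wAct, fixedCoords, Prod.ext_iff, and_comm]

lemma fixCount_eq {n r : ℕ} [NeZero n] (σ : (Fin r → ZMod n) × Perm (Fin r)) :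
    fixCount n r σ = n * #(fixedCoords σ) := by
  have : ({p | wAct n r σ p = p} : Finset (ZMod n × Fin r)) = univ ×ˢ fixedCoords σ := by
    ext p
    simp [wAct_eq_self_iff]
  rw [fixCount, Nat.card_eq_fintype_card, Fintype.card_subtype, this, card_product, card_univ,
    ZMod.card]

lemma choose_mul_pow_mul_factorial {K : Type*} [Field K] [CharZero K] {x : K} (hx : x ≠ 0)
    {m t : ℕ} (ht : t ≤ m) :
    (m.choose t : K) * (x ^ (m - t) * (m - t)!) = x ^ m * m ! * (x⁻¹ ^ t / t !) := by
  have : (t ! : K) ≠ 0 := Nat.cast_ne_zero.2 t.factorial_ne_zero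
  rw [← Nat.choose_mul_factorial_mul_factorial ht, ← pow_sub_mul_pow x ht, inv_pow]
  push_cast
  field_simp

lemma numWreathDerangements_eq {n : ℕ} (hn : n ≠ 0) (m : ℕ) :
    (numWreathDerangements n m : ℝ) =
      n ^ m * m ! * ∑ t ∈ range (m + 1), (-(n : ℝ)⁻¹) ^ t / t ! := by
  rw [numWreathDerangements, mul_sum]
  push_cast
  refine sum_congr rfl fun t ht => ?_
  rw [choose_mul_pow_mul_factorial (Nat.cast_ne_zero.2 hn) (Nat.lt_succ_iff.1 (mem_range.1 ht)),
    neg_pow]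
  ring

lemma omega_eq {n r j : ℕ} [NeZero n] (hj : j ≤ r) :
    omega n r j =
      (n : ℝ)⁻¹ ^ j / j ! * ∑ t ∈ range (r - j + 1), (-(n : ℝ)⁻¹) ^ t / t ! := by
  have hcard : Nat.card {σ : (Fin r → ZMod n) × Perm (Fin r) // fixCount n r σ = j * n} =
      #{σ : (Fin r → ZMod n) × Perm (Fin r) | #(fixedCoords σ) = j} := by
    rw [Nat.card_eq_fintype_card, Fintype.card_subtype]
    congr 1
    refine filter_congr fun σ _ => ?_
    rw [fixCount_eq, mul_comm j, Nat.mul_left_cancel_iff (Nat.pos_of_ne_zero (NeZero.ne n))]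
  have hn : (n : ℝ) ≠ 0 := Nat.cast_ne_zero.2 (NeZero.ne n)
  rw [omega, hcard, ← Int.cast_natCast, card_card_fixedCoords_eq, Fintype.card_fin]
  push_cast
  rw [numWreathDerangements_eq (NeZero.ne n), ← mul_assoc, choose_mul_pow_mul_factorial hn hj]
  field_simp

lemma abs_sum_range_pow_div_factorial_sub_le {x : ℝ} (hx : |x| ≤ 1) {s : ℕ} (hs : 1 ≤ s) :
    |(∑ t ∈ range (s + 1), x ^ t / t !) - (1 + x)| ≤ 3 * x ^ 2 := by
  obtain ⟨s, rfl⟩ := Nat.exists_eq_add_of_le' hs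
  have hterm : ∀ t ∈ range s, |x ^ (t + 2) / (t + 2)!| ≤ x ^ 2 * (1 ^ t / t !) := by
    intro t _
    rw [abs_div, Nat.abs_cast, abs_pow, pow_add, sq_abs, mul_comm, mul_div_assoc, one_pow]
    refine mul_le_mul_of_nonneg_left ?_ (sq_nonneg x)
    exact div_le_div₀ zero_le_one (pow_le_one₀ (abs_nonneg x) hx) (by positivity)
      (Nat.cast_le.2 (Nat.factorial_le (by omega)))
  have hlow : x ^ (0 + 1) / ((0 + 1)! : ℝ) + x ^ 0 / (0 ! : ℝ) = 1 + x := by norm_num; ring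
  rw [sum_range_succ', sum_range_succ', add_assoc, hlow, add_sub_cancel_right]
  calc |∑ t ∈ range s, x ^ (t + 2) / (t + 2)!|
      ≤ ∑ t ∈ range s, x ^ 2 * (1 ^ t / t !) :=
        (abs_sum_le_sum_abs _ _).trans (sum_le_sum hterm)
    _ ≤ x ^ 2 * Real.exp 1 := by
      rw [← mul_sum]
      gcongr
      exact Real.sum_le_exp_of_nonneg zero_le_one s
    _ ≤ 3 * x ^ 2 := by nlinarith [Real.exp_one_lt_three, sq_nonneg x]

lemma abs_omega_sub_le {n r j : ℕ} [NeZero n] (hjr : j < r) :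
    |omega n r j - 1 / (j ! * n ^ j) * (1 - 1 / n)| ≤ 3 / n ^ (j + 2) := by
  have hn : (1 : ℝ) ≤ n := Nat.one_le_cast.2 (Nat.pos_of_ne_zero (NeZero.ne n))
  have hx : |-(n : ℝ)⁻¹| ≤ 1 := by
    rw [abs_neg, abs_inv, Nat.abs_cast]
    exact inv_le_one_of_one_le₀ hn
  have hmain :
      1 / (j ! * n ^ j) * (1 - 1 / n) = (n : ℝ)⁻¹ ^ j / j ! * (1 + -(n : ℝ)⁻¹) := by
    rw [inv_pow]
    field_simp
    ring
  rw [omega_eq hjr.le, hmain, ← mul_sub, abs_mul, abs_of_nonneg (by positivity)]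
  calc _ ≤ (n : ℝ)⁻¹ ^ j / j ! * (3 * (-(n : ℝ)⁻¹) ^ 2) := by
        gcongr
        exact abs_sum_range_pow_div_factorial_sub_le hx (by omega)
    _ = 3 / (j ! * n ^ (j + 2)) := by
        rw [inv_pow]
        field_simp
        ring
    _ ≤ 3 / n ^ (j + 2) := by
        gcongr
        exact le_mul_of_one_le_left (by positivity) (Nat.one_le_cast.2 j.factorial_pos)

open ArithmeticFunction in
lemma pow_sub_pow_half_lt_sum_moebius_mul_pow {k n : ℕ} (hk : 2 ≤ k) (hn : n ≠ 0) :
    (k : ℤ) ^ n - k ^ (n / 2 + 1) < ∑ d ∈ n.divisors, moebius (n / d) * (k : ℤ) ^ d := by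
  have hhalf : ∀ d ∈ n.properDivisors, d < n / 2 + 1 := by
    intro d hd
    obtain ⟨⟨c, rfl⟩, hlt⟩ := Nat.mem_properDivisors.1 hd
    have hc : 2 ≤ c := by
      rcases c with _ | _ | c
      · simp at hlt
      · simp at hlt
      · omega
    rw [Nat.lt_succ_iff, Nat.le_div_iff_mul_le two_pos]
    exact Nat.mul_le_mul_left d hc
  have hgeom : ((∑ d ∈ n.properDivisors, k ^ d : ℕ) : ℤ) < (k : ℤ) ^ (n / 2 + 1) := by
    exact_mod_cast Nat.geomSum_lt hk hhalf
  have hterm : ∀ d ∈ n.properDivisors, -(k : ℤ) ^ d ≤ moebius (n / d) * (k : ℤ) ^ d :=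
    fun d _ => by
      have := (abs_le.1 (abs_moebius_le_one (n := n / d))).1
      nlinarith [pow_nonneg (Int.natCast_nonneg k) d]
  rw [← Nat.cons_self_properDivisors hn, sum_cons, Nat.div_self (Nat.pos_of_ne_zero hn),
    moebius_apply_one, one_mul]
  push_cast at hgeom
  linarith [sum_le_sum hterm, sum_neg_distrib (s := n.properDivisors) (f := fun d => (k : ℤ) ^ d)]

lemma eventually_mul_le_two_pow (m : ℕ) : ∀ᶠ n : ℕ in atTop, m * n ≤ 2 ^ n := by
  have h := (tendsto_pow_const_div_const_pow_of_one_lt 1 (one_lt_two (α := ℝ))).eventually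
    (gt_mem_nhds (show (0 : ℝ) < 1 / (m + 1) by positivity))
  filter_upwards [h] with n hn
  rw [pow_one, div_lt_div_iff₀ (by positivity) (by positivity), one_mul] at hn
  have : (m * n : ℝ) ≤ 2 ^ n := by nlinarith [(n.cast_nonneg : (0 : ℝ) ≤ n)]
  exact_mod_cast this

lemma tendsto_rk_atTop {k : ℕ} (hk : 2 ≤ k) : Tendsto (rk k) atTop atTop := by
  refine tendsto_atTop.2 fun m => ?_
  filter_upwards [eventually_mul_le_two_pow (2 * m), eventually_ge_atTop 4] with n hmn hn
  -- `k^n - k^(n/2+1) ≥ k^n - k^(n-1) ≥ k^(n-1) ≥ 2^(n-1) ≥ m n`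
  have hpow : m * n + k ^ (n / 2 + 1) ≤ k ^ n := by
    have hhalf : k ^ (n / 2 + 1) ≤ k ^ (n - 1) := Nat.pow_le_pow_right (by omega) (by omega)
    have htwo : 2 ^ (n - 1) ≤ k ^ (n - 1) := Nat.pow_le_pow_left hk _
    have hk_succ : k ^ n = k * k ^ (n - 1) := by rw [← pow_succ']; congr 1; omega
    have htwo_succ : 2 ^ n = 2 * 2 ^ (n - 1) := by rw [← pow_succ']; congr 1; omega
    have hk_mul : 2 * k ^ (n - 1) ≤ k * k ^ (n - 1) := Nat.mul_le_mul_right _ hk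
    rw [mul_assoc, htwo_succ] at hmn
    omega
  have hS := pow_sub_pow_half_lt_sum_moebius_mul_pow hk (by omega : n ≠ 0)
  have hpowℤ : (m * n + k ^ (n / 2 + 1) : ℤ) ≤ k ^ n := by exact_mod_cast hpow
  have hdiv :
      (m : ℤ) ≤ (∑ d ∈ n.divisors, ArithmeticFunction.moebius (n / d) * (k : ℤ) ^ d) / n :=
    (Int.le_ediv_iff_mul_le (by omega)).2 (by linarith)
  exact_mod_cast hdiv.trans (Int.self_le_toNat _)

theorem stmt6 (k j : ℕ) (hk : 2 ≤ k) :
    ∃ C : ℝ, 0 < C ∧ ∀ n : ℕ, 1 ≤ n →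
      |komega k n j - (1 / ((j.factorial : ℝ) * (n : ℝ) ^ j)) * (1 - 1 / (n : ℝ))|
        ≤ C / (n : ℝ) ^ (j + 2) := by
  set g : ℕ → ℝ := fun n =>
    |komega k n j - 1 / ((j.factorial : ℝ) * (n : ℝ) ^ j) * (1 - 1 / (n : ℝ))| *
      (n : ℝ) ^ (j + 2)
  have hg : ∀ᶠ n in atTop, g n ≤ 3 := by
    filter_upwards [(tendsto_rk_atTop hk).eventually_gt_atTop j, eventually_ge_atTop 1]
      with n hr hn
    have : NeZero n := NeZero.of_pos hn
    rw [← le_div_iff₀ (by positivity)]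
    exact abs_omega_sub_le hr
  obtain ⟨C, hC⟩ := (isBoundedUnder_of_eventually_le
    (hg.filter_mono Nat.cofinite_eq_atTop.le)).bddAbove_range_of_cofinite
  refine ⟨max C 1, by positivity, fun n hn => ?_⟩
  have : (0 : ℝ) < (n : ℝ) ^ (j + 2) := by positivity
  rw [le_div_iff₀ this]
  exact (hC ⟨n, rfl⟩).trans (le_max_left _ _)
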